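/- arXiv:1210.1018 — 9 statements merged into one kernel-verified Lean document; each statement's English description precedes it below -/
import Mathlib

section
/- For real x and natural numbers m, k with 1 ≤ m ≤ k, if x = 2cos(π/n) for some n, then the diagonal product formula holds: S(m-1,x)·S(k-1,x) = Σ_{j=0}^{m-1} S(k+m-2(j+1), x), where indices are interpreted via S(-1,x)=0. Equivalently, for all real x: S(m-1,x)·S(k-1,x) = Σ_{j=0}^{m-1} S(k-m+2j, x). -/
/-- Chebyshev S-polynomials: S(0,x)=1, S(1,x)=x, S(m,x)=x*S(m-1,x)-S(m-2,x). -/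
noncomputable def S : ℕ → ℝ → ℝ
  | 0, _ => 1
  | 1, x => x
  | (n+2), x => x * S (n+1) x - S n x

/-!
`S n x` is the value at `x` of Mathlib's `Polynomial.Chebyshev.S n`, whose index runs over `ℤ`
with the three-term recurrence holding everywhere, so `S (-1) = 0` is built in. There the
Casoratian `S (m+1) S n - S m S (n+1)` equals `S (n-m-1)`, and unrolling it in `m` telescopes
`S m S n` into `∑_{j ≤ m} S (n-m+2j)`.
-/

namespace Polynomial.Chebyshev

variable (R : Type*) [CommRing R]

theorem S_mul_S_sub_S_mul_S (m n : ℤ) :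
    S R (m + 1) * S R n - S R m * S R (n + 1) = S R (n - m - 1) := by
  induction m using Int.induction_on generalizing n with
  | zero => simpa using (S_sub_one R n).symm
  | succ m ih =>
    linear_combination (norm := ring_nf)
      S R n * S_add_two R m - S R (m + 1) * S_sub_one R n + ih (n - 1)
  | pred m ih =>
    linear_combination (norm := ring_nf)
      -S R (n + 1) * S_sub_one R (-m) + S R (-m) * S_add_two R n + ih (n + 1)

theorem S_mul_S (m : ℕ) (n : ℤ) :
    S R m * S R n = ∑ j ∈ Finset.range (m + 1), S R (n - m + 2 * j) := by
  induction m generalizing n with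
  | zero => simp
  | succ m ih =>
    have shift : ∑ j ∈ Finset.range (m + 1), S R (n - (m + 1 : ℕ) + 2 * (j + 1 : ℕ)) =
        ∑ j ∈ Finset.range (m + 1), S R (n + 1 - m + 2 * j) :=
      Finset.sum_congr rfl fun j _ => by push_cast; ring_nf
    rw [Finset.sum_range_succ', shift, ← ih]
    push_cast
    linear_combination (norm := ring_nf) S_mul_S_sub_S_mul_S R m n

end Polynomial.Chebyshev

theorem S_eq_eval_chebyshevS (x : ℝ) : ∀ n : ℕ, S n x = (Polynomial.Chebyshev.S ℝ n).eval x
  | 0 => by simp [S]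
  | 1 => by simp [S]
  | n + 2 => by
    rw [S, S_eq_eval_chebyshevS x (n + 1), S_eq_eval_chebyshevS x n]
    push_cast
    simp [Polynomial.Chebyshev.S_add_two]

/-- Steinbach's diagonal product formula:
S(m-1,x)·S(k-1,x) = Σ_{j=0}^{m-1} S(k-m+2j, x) for 1 ≤ m ≤ k and all real x. -/
theorem diagonal_product_formula (m k : ℕ) (hm : 1 ≤ m) (hmk : m ≤ k) (x : ℝ) :
    S (m - 1) x * S (k - 1) x = ∑ j ∈ Finset.range m, S (k - m + 2 * j) x := by
  obtain ⟨a, rfl⟩ := Nat.exists_eq_add_of_le' hm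
  obtain ⟨d, rfl⟩ := Nat.exists_eq_add_of_le hmk
  have product := congrArg (Polynomial.eval x) (Polynomial.Chebyshev.S_mul_S ℝ a (a + d : ℕ))
  simp only [Polynomial.eval_mul, Polynomial.eval_finsetSum] at product
  rw [show a + 1 + d - 1 = a + d by omega, show a + 1 + d - (a + 1) = d by omega]
  simp only [Nat.add_sub_cancel, S_eq_eval_chebyshevS, product]
  refine Finset.sum_congr rfl fun j _ => ?_
  push_cast
  ring_nf
end

section
/- For n ≥ 2, the monic polynomial C(n,x) := ∏_{k=1, gcd(k,2n)=1}^{n-1} (x - 2cos(kπ/n)) is the minimal polynomial of 2cos(π/n) over ℚ, and it has integer coefficients and degree φ(2n)/2, where φ is Euler's totient function. -/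
/-!
Let `ζ = exp(πi/n)`, a primitive `2n`-th root of unity, so that `2 cos(kπ/n) = ζᵏ + ζ⁻ᵏ`.
Every `ζᵏ` with `k` coprime to `2n` is a Galois conjugate of `ζ` (the cyclotomic polynomial is
irreducible), hence every `2 cos(kπ/n)` with `gcd(k, 2n) = 1` is a conjugate of `2 cos(π/n)`.
Since `ζ` is a root of `X² - (ζ + ζ⁻¹) X + 1` but is not real, `[ℚ(ζ) : ℚ(ζ + ζ⁻¹)] = 2`, so
`2 cos(π/n)` has degree `φ(2n)/2`. This is also the number of `k < n` coprime to `2n`, because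
`k ↦ 2n - k` matches them with those in `(n, 2n)`; and these `k` give distinct cosines, so the
product has exactly the right number of distinct roots of the minimal polynomial. Integrality of
the coefficients comes from `2 cos(π/n)` being an algebraic integer.
-/

open Polynomial IntermediateField
open scoped Real

theorem minpoly.natDegree_eq_natDegree_add_inv_mul_two {K L : Type*} [Field K] [Field L]
    [Algebra K L] {z : L} (hz : IsIntegral K z) (hz₀ : z ≠ 0) (hnot : z ∉ K⟮z + z⁻¹⟯) :
    (minpoly K z).natDegree = (minpoly K (z + z⁻¹)).natDegree * 2 := by
  have hle : K⟮z + z⁻¹⟯ ≤ K⟮z⟯ := adjoin_simple_le_iff.mpr <|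
    add_mem (mem_adjoin_simple_self K z) (inv_mem (mem_adjoin_simple_self K z))
  set a : K⟮z + z⁻¹⟯ := AdjoinSimple.gen K (z + z⁻¹)
  set q : K⟮z + z⁻¹⟯[X] := X ^ 2 - C a * X + 1
  have hq_root : Polynomial.aeval z q = 0 := by
    simp only [q, map_add, map_sub, map_mul, map_pow, aeval_X, aeval_C, map_one,
      AdjoinSimple.algebraMap_gen, a]
    field_simp
    ring
  have hq_deg : q.natDegree = 2 := by simp only [q]; compute_degree!
  have hq_ne : q ≠ 0 := fun h => by simp [h] at hq_deg
  have hdeg : (minpoly K⟮z + z⁻¹⟯ z).natDegree = 2 :=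
    le_antisymm (hq_deg ▸ natDegree_le_of_dvd (minpoly.dvd _ _ hq_root) hq_ne)
      ((minpoly.two_le_natDegree_subalgebra hz.tower_top).mpr hnot)
  -- tower law for `K ≤ K⟮z + z⁻¹⟯ ≤ K⟮z + z⁻¹⟯⟮z⟯ = K⟮z⟯`
  rw [← adjoin.finrank hz, ← adjoin.finrank (hz.add hz.inv), ← finrank_bot_mul_relfinrank hle,
    relfinrank_eq_finrank_of_le hle, extendScalars_adjoin hle, adjoin.finrank hz.tower_top, hdeg]

theorem IsConjRoot.add_inv {K L : Type*} [Field K] [Field L] [Algebra K L] {z w : L}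
    (hz : IsIntegral K z) (h : IsConjRoot K z w) : IsConjRoot K (z + z⁻¹) (w + w⁻¹) := by
  let φ := (adjoin.powerBasis hz).lift w (by
    rw [adjoin.powerBasis_gen, minpoly_gen]; exact h.aeval_eq_zero)
  let g := AdjoinSimple.gen K z
  have hφ : φ (g + g⁻¹) = w + w⁻¹ := by
    have : φ g = w := PowerBasis.lift_gen _ _ _
    rw [map_add, map_inv₀, this]
  have hg : algebraMap K⟮z⟯ L (g + g⁻¹) = z + z⁻¹ := by
    rw [map_add, map_inv₀, AdjoinSimple.algebraMap_gen]
  rw [isConjRoot_def, ← hφ, ← hg, minpoly.algebraMap_eq (algebraMap K⟮z⟯ L).injective,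
    minpoly.algHom_eq φ φ.injective]

theorem Polynomial.Monic.eq_prod_X_sub_C_of_injOn {R ι : Type*} [CommRing R] [IsDomain R]
    {p : R[X]} (hp : p.Monic) {s : Finset ι} {f : ι → R} (hf : Set.InjOn f s)
    (hroot : ∀ i ∈ s, p.IsRoot (f i)) (hdeg : p.natDegree ≤ s.card) :
    p = ∏ i ∈ s, (X - C (f i)) := by
  classical
  have hdvd : ∏ i ∈ s, (X - C (f i)) ∣ p := by
    rw [← Finset.prod_image (f := fun r => X - C r) hf, Finset.prod_eq_multiset_prod,
      Multiset.prod_X_sub_C_dvd_iff_le_roots hp.ne_zero, Multiset.le_iff_subset (s.image f).nodup]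
    intro r hr
    obtain ⟨i, hi, rfl⟩ := Finset.mem_image.mp hr
    exact (mem_roots hp.ne_zero).mpr (hroot i hi)
  refine eq_of_monic_of_dvd_of_natDegree_le (monic_prod_of_monic _ _ fun i _ => monic_X_sub_C _)
    hp hdvd ?_
  rw [natDegree_prod_of_monic _ _ fun i _ => monic_X_sub_C _]
  simpa using hdeg

open Finset in
theorem Nat.two_mul_card_filter_range_coprime_two_mul {n : ℕ} (hn : 1 < n) :
    2 * #{k ∈ range n | k.Coprime (2 * n)} = Nat.totient (2 * n) := by
  set S := {k ∈ range n | k.Coprime (2 * n)}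
  set T := {k ∈ range (2 * n) | (2 * n).Coprime k}
  have hlow : #{k ∈ T | k < n} = #S := by
    congr 1; ext k; simp only [T, S, mem_filter, mem_range, Nat.coprime_comm]; omega
  have hhigh : #{k ∈ T | ¬k < n} = #S := by
    have hn_ne : ¬(2 * n).Coprime n := by
      rw [Nat.coprime_mul_iff_left, Nat.coprime_self]; omega
    have h0_ne : ¬(2 * n).Coprime 0 := by rw [Nat.coprime_zero_right]; omega
    refine card_nbij' (2 * n - ·) (2 * n - ·) ?_ ?_ ?_ ?_ <;> intro k hk <;>
      simp only [T, S, coe_filter, mem_filter, mem_range, Set.mem_ofPred_eq] at hk ⊢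
    · have : k ≠ n := by rintro rfl; exact hn_ne hk.1.2
      exact ⟨by omega, (Nat.coprime_self_sub_left (by omega)).mpr hk.1.2.symm⟩
    · have : k ≠ 0 := by rintro rfl; exact h0_ne hk.2.symm
      exact ⟨⟨by omega, (Nat.coprime_self_sub_right (by omega)).mpr hk.2.symm⟩, by omega⟩
    all_goals omega
  rw [show Nat.totient (2 * n) = #T from Nat.totient_eq_card_coprime _,
    ← card_filter_add_card_filter_not (s := T) (fun k => k < n), hlow, hhigh]
  ring

theorem Complex.im_eq_zero_of_mem_adjoin_ofReal {r : ℝ} {y : ℂ} (hy : y ∈ ℚ⟮(r : ℂ)⟯) :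
    y.im = 0 := by
  have hle : ℚ⟮(r : ℂ)⟯ ≤ (Complex.ofRealAm.restrictScalars ℚ).fieldRange :=
    adjoin_simple_le_iff.mpr ⟨r, rfl⟩
  obtain ⟨x, rfl⟩ := hle hy
  exact Complex.ofReal_im x

section TwoCos

open Complex

variable {n : ℕ}

theorem isPrimitiveRoot_exp_pi_mul_I_div (hn : n ≠ 0) :
    IsPrimitiveRoot (exp (π * I / n)) (2 * n) := by
  convert isPrimitiveRoot_exp (2 * n) (by omega) using 2
  push_cast
  field_simp

theorem exp_pi_mul_I_div_pow_add_inv (k : ℕ) :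
    exp (π * I / n) ^ k + (exp (π * I / n) ^ k)⁻¹ = ((2 * Real.cos (k * π / n) : ℝ) : ℂ) := by
  rw [← exp_nat_mul, ← exp_neg, ofReal_mul, ofReal_cos, cos]
  push_cast
  ring_nf

theorem isConjRoot_two_mul_cos_pi_div (hn : n ≠ 0) {k : ℕ} (hk : k.Coprime (2 * n)) :
    IsConjRoot ℚ (2 * Real.cos (π / n)) (2 * Real.cos (k * π / n)) := by
  have hζ := isPrimitiveRoot_exp_pi_mul_I_div hn
  have hpos : 0 < 2 * n := by omega
  have hconj : IsConjRoot ℚ (exp (π * I / n)) (exp (π * I / n) ^ k) :=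
    (cyclotomic_eq_minpoly_rat hζ hpos).symm.trans
      (cyclotomic_eq_minpoly_rat (hζ.pow_of_coprime k hk) hpos)
  have := hconj.add_inv ((hζ.isIntegral hpos).tower_top)
  rw [← pow_one (exp _), exp_pi_mul_I_div_pow_add_inv, pow_one, exp_pi_mul_I_div_pow_add_inv,
    Nat.cast_one, one_mul] at this
  exact (isConjRoot_algHom_iff (ofRealAm.restrictScalars ℚ)).mp this

theorem natDegree_minpoly_two_mul_cos_pi_div_mul_two (hn : 1 < n) :
    (minpoly ℚ (2 * Real.cos (π / n))).natDegree * 2 = Nat.totient (2 * n) := by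
  set ζ := exp (π * I / n)
  have hζ := isPrimitiveRoot_exp_pi_mul_I_div (n := n) (by omega)
  have hpos : 0 < 2 * n := by omega
  have hsum : ζ + ζ⁻¹ = algebraMap ℝ ℂ (2 * Real.cos (π / n)) := by
    simpa using exp_pi_mul_I_div_pow_add_inv (n := n) 1
  have hnot : ζ ∉ ℚ⟮ζ + ζ⁻¹⟯ := by
    intro hmem
    have him : ζ.im = Real.sin (π / n) := by simp [ζ, exp_im]
    have hsin : 0 < Real.sin (π / n) :=
      Real.sin_pos_of_pos_of_lt_pi (by positivity) (div_lt_self Real.pi_pos (by exact_mod_cast hn))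
    rw [hsum] at hmem
    linarith [im_eq_zero_of_mem_adjoin_ofReal hmem]
  rw [← natDegree_cyclotomic (2 * n) ℚ, cyclotomic_eq_minpoly_rat hζ hpos,
    minpoly.natDegree_eq_natDegree_add_inv_mul_two ((hζ.isIntegral hpos).tower_top)
      (exp_ne_zero _) hnot, hsum, minpoly.algebraMap_eq (algebraMap ℝ ℂ).injective]

theorem injOn_two_mul_cos_nat_mul_pi_div (hn : n ≠ 0) :
    Set.InjOn (fun k : ℕ => 2 * Real.cos (k * π / n)) (Set.Iic n) := by
  have hn' : (0 : ℝ) < n := by positivity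
  have hmem {k : ℕ} (hk : k ≤ n) : k * π / n ∈ Set.Icc 0 π := by
    refine ⟨by positivity, (div_le_iff₀ hn').mpr ?_⟩
    rw [mul_comm π]
    exact mul_le_mul_of_nonneg_right (by exact_mod_cast hk) Real.pi_pos.le
  intro a ha b hb hab
  have := Real.injOn_cos (hmem ha) (hmem hb) (by simpa using hab)
  field_simp at this
  exact_mod_cast this

end TwoCos

/-- For n ≥ 2, the monic polynomial ∏_{1≤k≤n-1, gcd(k,2n)=1} (x - 2cos(kπ/n)) is the
minimal polynomial of 2cos(π/n) over ℚ, has integer coefficients, and has degree φ(2n)/2. -/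
theorem minpoly_two_cos_pi_div (n : ℕ) (hn : 2 ≤ n) :
    (minpoly ℚ ((2 : ℝ) * Real.cos (π / n))).map (algebraMap ℚ ℝ) =
      ∏ k ∈ (Finset.range n).filter (fun k => Nat.gcd k (2 * n) = 1),
        (Polynomial.X - Polynomial.C (2 * Real.cos (k * π / n))) ∧
    (∀ i : ℕ, ∃ z : ℤ, (minpoly ℚ ((2 : ℝ) * Real.cos (π / n))).coeff i = (z : ℚ)) ∧
    (minpoly ℚ ((2 : ℝ) * Real.cos (π / n))).natDegree = Nat.totient (2 * n) / 2 := by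
  set S := (Finset.range n).filter (fun k => Nat.gcd k (2 * n) = 1)
  have hint : IsIntegral ℤ (2 * Real.cos (π / n)) := by
    simpa [div_eq_inv_mul] using Real.isIntegral_two_mul_cos_rat_mul_pi (1 / n)
  have hdeg := natDegree_minpoly_two_mul_cos_pi_div_mul_two (n := n) (by omega)
  have hcard : 2 * S.card = Nat.totient (2 * n) := Nat.two_mul_card_filter_range_coprime_two_mul hn
  refine ⟨?_, fun i => ⟨(minpoly ℤ (2 * Real.cos (π / n))).coeff i, ?_⟩, by omega⟩
  · refine ((minpoly.monic hint.tower_top).map _).eq_prod_X_sub_C_of_injOn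
      ((injOn_two_mul_cos_nat_mul_pi_div (by omega)).mono fun k hk => ?_) (fun k hk => ?_) ?_
    · exact (Finset.mem_range.mp (Finset.mem_filter.mp hk).1).le
    · rw [IsRoot, eval_map_algebraMap]
      exact (isConjRoot_two_mul_cos_pi_div (by omega) (Finset.mem_filter.mp hk).2).aeval_eq_zero
    · rw [natDegree_map]; omega
  · rw [minpoly.isIntegrallyClosed_eq_field_fractions' ℚ hint, coeff_map, eq_intCast]
end

section
/- For m ≥ 1, the minimal polynomial of 2cos(π/2^m) over ℚ equals \hat{t}(2^{m-1}, x) = 2·T(2^{m-1}, x/2), where T is the Chebyshev polynomial of the first kind. In particular, 2cos(π/2^m) is a root of 2·T(2^{m-1}, x/2) and this polynomial is irreducible over ℚ of degree 2^{m-1}. -/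
open Real Polynomial

lemma dickson_eq_stmt (n : ℕ) :
    dickson 1 (1 : ℚ) n =
      2 * (Polynomial.Chebyshev.T ℚ ((n : ℤ))).comp (Polynomial.C (2 : ℚ)⁻¹ * Polynomial.X) := by
  rw [Polynomial.dickson_one_one_eq_chebyshev_T]
  norm_num [invOf_eq_inv]

lemma dickson_two_int : dickson 1 (1 : ℤ) 2 = X ^ 2 - 2 := by
  rw [Polynomial.dickson_two]; norm_num

lemma dickson_monic_deg : ∀ n : ℕ,
    (dickson 1 (1 : ℤ) (n + 1)).Monic ∧ (dickson 1 (1 : ℤ) (n + 1)).degree = ((n + 1 : ℕ) : WithBot ℕ)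
  | 0 => by simp [Polynomial.dickson_one, monic_X]
  | 1 => by
      rw [show (1 + 1 : ℕ) = 2 from rfl, dickson_two_int]
      have hlt : (2 : ℤ[X]).degree < (X ^ 2 : ℤ[X]).degree := by
        rw [show (2 : ℤ[X]) = C 2 by norm_num, Polynomial.degree_X_pow]
        apply lt_of_le_of_lt Polynomial.degree_C_le
        norm_num
      exact ⟨(monic_X_pow 2).sub_of_left hlt,
        by rw [Polynomial.degree_sub_eq_left_of_degree_lt hlt, Polynomial.degree_X_pow]⟩
  | n + 2 => by
      obtain ⟨h1m, h1d⟩ := dickson_monic_deg (n + 1)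
      obtain ⟨h0m, h0d⟩ := dickson_monic_deg n
      have hrec := Polynomial.dickson_add_two 1 (1 : ℤ) (n + 1)
      rw [map_one, one_mul] at hrec
      have hXm : (X * dickson 1 (1 : ℤ) (n + 1 + 1)).Monic := monic_X.mul h1m
      have hXd : (X * dickson 1 (1 : ℤ) (n + 1 + 1)).degree = ((n + 3 : ℕ) : WithBot ℕ) := by
        rw [Polynomial.degree_mul, Polynomial.degree_X, h1d]
        push_cast; ring
      have hlt : (dickson 1 (1 : ℤ) (n + 1)).degree < (X * dickson 1 (1 : ℤ) (n + 1 + 1)).degree := by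
        rw [hXd, h0d]
        exact_mod_cast Nat.lt_succ_of_lt (Nat.lt_succ_self _)
      refine ⟨?_, ?_⟩
      · rw [show n + 2 + 1 = n + 1 + 2 from rfl, hrec]
        exact hXm.sub_of_left hlt
      · rw [show n + 2 + 1 = n + 1 + 2 from rfl, hrec,
          Polynomial.degree_sub_eq_left_of_degree_lt hlt, hXd]

lemma dickson_monic (n : ℕ) (hn : n ≠ 0) : (dickson 1 (1 : ℤ) n).Monic := by
  obtain ⟨k, rfl⟩ := Nat.exists_eq_succ_of_ne_zero hn
  exact (dickson_monic_deg k).1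

lemma dickson_natDegree (n : ℕ) (hn : n ≠ 0) : (dickson 1 (1 : ℤ) n).natDegree = n := by
  obtain ⟨k, rfl⟩ := Nat.exists_eq_succ_of_ne_zero hn
  exact Polynomial.natDegree_eq_of_degree_eq_some (dickson_monic_deg k).2

lemma dickson_zmod_two_pow (k : ℕ) : dickson 1 (1 : ZMod 2) (2 ^ k) = X ^ (2 ^ k) := by
  induction k with
  | zero => simp [Polynomial.dickson_one]
  | succ k ih =>
      have h2 : dickson 1 (1 : ZMod 2) 2 = X ^ 2 :=
        Polynomial.dickson_one_one_charP (R := ZMod 2) 2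
      rw [pow_succ, mul_comm, Polynomial.dickson_one_one_mul, h2, ih]
      rw [Polynomial.X_pow_comp]
      ring

lemma dickson_coeff_even (k : ℕ) {n : ℕ} (hn : n ≠ 2 ^ k) :
    (2 : ℤ) ∣ (dickson 1 (1 : ℤ) (2 ^ k)).coeff n := by
  have hmap : (dickson 1 (1 : ℤ) (2 ^ k)).map (Int.castRingHom (ZMod 2)) = X ^ (2 ^ k) := by
    rw [Polynomial.map_dickson, map_one, dickson_zmod_two_pow]
  have hc : (((dickson 1 (1 : ℤ) (2 ^ k)).coeff n : ℤ) : ZMod 2) = 0 := by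
    have := congrArg (fun p => Polynomial.coeff p n) hmap
    simpa [Polynomial.coeff_map, Polynomial.coeff_X_pow, hn] using this
  exact (ZMod.intCast_zmod_eq_zero_iff_dvd _ 2).mp hc

lemma dickson_eisenstein (k : ℕ) (hk : 1 ≤ k) :
    (dickson 1 (1 : ℤ) (2 ^ k)).IsEisensteinAt (Ideal.span {(2 : ℤ)}) := by
  have hNn : (2 : ℕ) ^ k ≠ 0 := pow_ne_zero _ two_ne_zero
  constructor
  · rw [(dickson_monic _ hNn).leadingCoeff, Ideal.mem_span_singleton]
    norm_num
  · intro n hn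
    rw [dickson_natDegree _ hNn] at hn
    exact Ideal.mem_span_singleton.mpr (dickson_coeff_even k hn.ne)
  · -- constant coefficient not in (2)^2 = (4)
    have hsplit : dickson 1 (1 : ℤ) (2 ^ k) = (dickson 1 (1 : ℤ) (2 ^ (k - 1))) ^ 2 - 2 := by
      have h2 : 2 * 2 ^ (k - 1) = 2 ^ k := by
        rw [← pow_succ']
        congr 1
        omega
      rw [← h2, Polynomial.dickson_one_one_mul, dickson_two_int]
      simp [Polynomial.sub_comp, Polynomial.pow_comp]
    obtain ⟨t, ht⟩ := dickson_coeff_even (k - 1) (n := 0) (Ne.symm (pow_ne_zero _ two_ne_zero))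
    have hc0 : (dickson 1 (1 : ℤ) (2 ^ k)).coeff 0 = 4 * t ^ 2 - 2 := by
      rw [hsplit]
      have : ((dickson 1 (1 : ℤ) (2 ^ (k - 1))) ^ 2).coeff 0
          = ((dickson 1 (1 : ℤ) (2 ^ (k - 1))).coeff 0) ^ 2 := by
        simp [Polynomial.coeff_zero_eq_eval_zero]
      simp only [Polynomial.coeff_sub, this, ht, Polynomial.coeff_ofNat_zero]
      ring
    rw [hc0, Ideal.span_singleton_pow, Ideal.mem_span_singleton]
    intro h
    obtain ⟨c, hc⟩ := h
    omega

/-- For m ≥ 1, the minimal polynomial of 2cos(π/2^m) over ℚ equals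
t̂(2^{m-1}, x) = 2·T(2^{m-1}, x/2); in particular 2cos(π/2^m) is a root of that
polynomial, and it is irreducible over ℚ of degree 2^{m-1}. -/
theorem minpoly_two_cos_pi_div_two_pow (m : ℕ) (hm : 1 ≤ m) :
    minpoly ℚ ((2 : ℝ) * Real.cos (π / 2 ^ m)) =
      2 * (Polynomial.Chebyshev.T ℚ ((2 : ℤ) ^ (m - 1))).comp
          (Polynomial.C (2 : ℚ)⁻¹ * Polynomial.X) ∧
    Polynomial.aeval ((2 : ℝ) * Real.cos (π / 2 ^ m))
      (2 * (Polynomial.Chebyshev.T ℚ ((2 : ℤ) ^ (m - 1))).comp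
          (Polynomial.C (2 : ℚ)⁻¹ * Polynomial.X)) = 0 ∧
    Irreducible
      (2 * (Polynomial.Chebyshev.T ℚ ((2 : ℤ) ^ (m - 1))).comp
          (Polynomial.C (2 : ℚ)⁻¹ * Polynomial.X)) ∧
    (2 * (Polynomial.Chebyshev.T ℚ ((2 : ℤ) ^ (m - 1))).comp
          (Polynomial.C (2 : ℚ)⁻¹ * Polynomial.X)).natDegree = 2 ^ (m - 1) := by
  set N : ℕ := 2 ^ (m - 1) with hN
  have hNn : N ≠ 0 := pow_ne_zero _ two_ne_zero
  -- identify the statement polynomial with the Dickson polynomial over ℚ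
  have hidx : ((2 : ℤ) ^ (m - 1)) = ((N : ℕ) : ℤ) := by push_cast [hN]; ring
  have hPq : (2 : ℚ[X]) * (Polynomial.Chebyshev.T ℚ ((2 : ℤ) ^ (m - 1))).comp
          (Polynomial.C (2 : ℚ)⁻¹ * Polynomial.X) = dickson 1 (1 : ℚ) N := by
    rw [hidx, dickson_eq_stmt]
  have hmapq : (dickson 1 (1 : ℤ) N).map (Int.castRingHom ℚ) = dickson 1 (1 : ℚ) N := by
    rw [Polynomial.map_dickson, map_one]
  -- monicity and degree
  have hmonicZ := dickson_monic N hNn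
  have hmonicQ : (dickson 1 (1 : ℚ) N).Monic := by
    rw [← hmapq]; exact hmonicZ.map _
  have hdegQ : (dickson 1 (1 : ℚ) N).natDegree = N := by
    rw [← hmapq, Polynomial.natDegree_map_eq_of_injective
      (fun a b h => by simpa using h), dickson_natDegree N hNn]
  -- the root
  have hm1 : m - 1 + 1 = m := by omega
  have hroot : Polynomial.aeval ((2 : ℝ) * Real.cos (π / 2 ^ m)) (dickson 1 (1 : ℚ) N) = 0 := by
    rw [Polynomial.aeval_def, ← Polynomial.eval_map]
    rw [show (dickson 1 (1 : ℚ) N).map (algebraMap ℚ ℝ) = dickson 1 (1 : ℝ) N by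
      rw [Polynomial.map_dickson, map_one]]
    rw [Polynomial.dickson_one_one_eq_chebyshev_T]
    rw [Polynomial.eval_mul, Polynomial.eval_comp, Polynomial.eval_mul, Polynomial.eval_C,
      Polynomial.eval_X, invOf_eq_inv]
    have harg : (2 : ℝ)⁻¹ * (2 * Real.cos (π / 2 ^ m)) = Real.cos (π / 2 ^ m) := by ring
    rw [harg, Polynomial.Chebyshev.T_real_cos]
    have : ((N : ℤ) : ℝ) * (π / 2 ^ m) = π / 2 := by
      have h2m : (2 : ℝ) ^ m = 2 * 2 ^ (m - 1) := by
        rw [← pow_succ', hm1]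
      push_cast [hN]
      rw [h2m]
      have : (2 : ℝ) ^ (m - 1) ≠ 0 := by positivity
      field_simp
    rw [this, Real.cos_pi_div_two]
    norm_num
  -- irreducibility over ℚ
  have hirrQ : Irreducible (dickson 1 (1 : ℚ) N) := by
    rcases eq_or_lt_of_le hm with h1 | h2
    · have : N = 1 := by rw [hN, ← h1]; norm_num
      rw [this, Polynomial.dickson_one]
      exact Polynomial.irreducible_X
    · have hk : 1 ≤ m - 1 := by omega
      have hEis := dickson_eisenstein (m - 1) hk
      have hprime : (Ideal.span {(2 : ℤ)}).IsPrime :=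
        (Ideal.span_singleton_prime (by norm_num)).mpr Int.prime_two
      have hirrZ : Irreducible (dickson 1 (1 : ℤ) N) :=
        hEis.irreducible hprime hmonicZ.isPrimitive
          (by rw [dickson_natDegree N hNn]; exact Nat.pos_of_ne_zero hNn)
      rw [← hmapq]
      exact (Polynomial.IsPrimitive.Int.irreducible_iff_irreducible_map_cast
        hmonicZ.isPrimitive).mp hirrZ
  refine ⟨?_, ?_, ?_, ?_⟩
  · rw [hPq]
    exact (minpoly.eq_of_irreducible_of_monic hirrQ hroot hmonicQ).symm
  · rw [hPq]; exact hroot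
  · rw [hPq]; exact hirrQ
  · rw [hPq, hdegQ]
end

section
/- For an odd prime p, the constant term of the minimal polynomial of 2cos(π/(2p)) is C(2p, 0) = (-1)^{(p-1)/2} · p. -/
/-!
Let ζ = exp(iπ/(2p)), a primitive 4p-th root of unity, so that α = 2cos(π/(2p)) = ζ + ζ⁻¹.
The Dickson polynomial D_p = `dickson 1 1 p` satisfies D_p(ζ + ζ⁻¹) = ζ^p + ζ^(-p), which
vanishes because ζ^(2p) = -1. As p is odd, D_p = X·W with W monic of degree p - 1, and W(α) = 0
because α ≠ 0. On the other hand ζ is a root of X² - αX + 1, so [ℚ(ζ) : ℚ(α)] ≤ 2 and α has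
degree at least φ(4p)/2 = p - 1. Hence W is the minimal polynomial of α, and its constant term
is the linear coefficient of D_p, namely (-1)^((p-1)/2)·p.
-/

open Real Polynomial IntermediateField

namespace Polynomial

variable {R : Type*} [CommRing R]

theorem natDegree_dickson_one_one_le (n : ℕ) : (dickson 1 (1 : R) n).natDegree ≤ n := by
  induction n using Nat.twoStepInduction with
  | zero => norm_num
  | one => simpa using natDegree_X_le
  | more n ih₀ ih₁ =>
    rw [dickson_add_two, C_1, one_mul]
    refine (natDegree_sub_le _ _).trans (max_le (natDegree_mul_le.trans ?_) (by omega))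
    grw [natDegree_X_le, ih₁]
    omega

theorem coeff_dickson_one_one_self {n : ℕ} (hn : n ≠ 0) :
    (dickson 1 (1 : R) n).coeff n = 1 := by
  induction n using Nat.twoStepInduction with
  | zero => contradiction
  | one => simp
  | more n _ ih₁ =>
    rw [dickson_add_two, coeff_sub, C_1, one_mul, coeff_X_mul, ih₁ (by omega),
      coeff_eq_zero_of_natDegree_lt ((natDegree_dickson_one_one_le n).trans_lt (by omega)),
      sub_zero]

theorem dickson_one_one_monic {n : ℕ} (hn : n ≠ 0) : (dickson 1 (1 : R) n).Monic :=
  monic_of_natDegree_le_of_coeff_eq_one n (natDegree_dickson_one_one_le n)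
    (coeff_dickson_one_one_self hn)

theorem natDegree_dickson_one_one [Nontrivial R] (n : ℕ) :
    (dickson 1 (1 : R) n).natDegree = n := by
  rcases eq_or_ne n 0 with rfl | hn
  · norm_num
  · exact natDegree_eq_of_le_of_coeff_ne_zero (natDegree_dickson_one_one_le n)
      (by simp [coeff_dickson_one_one_self hn])

theorem coeff_zero_dickson_one_one_add_two (n : ℕ) :
    (dickson 1 (1 : R) (n + 2)).coeff 0 = -(dickson 1 (1 : R) n).coeff 0 := by
  simp [dickson_add_two, mul_coeff_zero]

theorem coeff_one_dickson_one_one_add_two (n : ℕ) :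
    (dickson 1 (1 : R) (n + 2)).coeff 1 =
      (dickson 1 (1 : R) (n + 1)).coeff 0 - (dickson 1 (1 : R) n).coeff 1 := by
  simp [dickson_add_two, coeff_X_mul]

theorem coeff_zero_dickson_one_one_two_mul (k : ℕ) :
    (dickson 1 (1 : R) (2 * k)).coeff 0 = 2 * (-1) ^ k := by
  induction k with
  | zero => norm_num
  | succ k ih => rw [mul_add_one, coeff_zero_dickson_one_one_add_two, ih, pow_succ]; ring

theorem coeff_zero_dickson_one_one_two_mul_add_one (k : ℕ) :
    (dickson 1 (1 : R) (2 * k + 1)).coeff 0 = 0 := by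
  induction k with
  | zero => simp
  | succ k ih =>
    rw [mul_add_one, add_right_comm, coeff_zero_dickson_one_one_add_two, ih, neg_zero]

theorem coeff_one_dickson_one_one_two_mul_add_one (k : ℕ) :
    (dickson 1 (1 : R) (2 * k + 1)).coeff 1 = (-1) ^ k * (2 * k + 1) := by
  induction k with
  | zero => simp
  | succ k ih =>
    rw [mul_add_one, add_right_comm, coeff_one_dickson_one_one_add_two,
      show 2 * k + 1 + 1 = 2 * (k + 1) by ring, coeff_zero_dickson_one_one_two_mul, ih]
    push_cast
    ring

theorem dickson_one_one_eval_add_inv_eq_zero {x y : R} (hxy : x * y = 1) {m : ℕ}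
    (h : x ^ (2 * m) = -1) : (dickson 1 (1 : R) m).eval (x + y) = 0 := by
  rw [dickson_one_one_eval_add_inv x y hxy]
  calc x ^ m + y ^ m = (x ^ (2 * m) + 1) * y ^ m := by
        rw [add_mul, one_mul, two_mul, pow_add, mul_assoc, ← mul_pow, hxy, one_pow, mul_one]
    _ = 0 := by rw [h, neg_add_cancel, zero_mul]

end Polynomial

theorem natDegree_minpoly_le_two_mul_natDegree_minpoly_add_inv {F K : Type*} [Field F]
    [Field K] [Algebra F K] {ζ : K} (hζ : ζ ≠ 0) (hint : IsIntegral F (ζ + ζ⁻¹)) :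
    (minpoly F ζ).natDegree ≤ 2 * (minpoly F (ζ + ζ⁻¹)).natDegree := by
  set E := F⟮ζ + ζ⁻¹⟯
  set x : E := AdjoinSimple.gen F (ζ + ζ⁻¹)
  have hq : (X ^ 2 - C x * X + 1).Monic := by monicity!
  have hqdeg : (X ^ 2 - C x * X + 1).natDegree = 2 := by compute_degree!
  have hqζ : aeval ζ (X ^ 2 - C x * X + 1) = 0 := by
    simp only [map_add, map_sub, map_mul, map_pow, map_one, aeval_X, aeval_C, x,
      IntermediateField.algebraMap_apply, AdjoinSimple.coe_gen]
    field_simp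
    ring
  have hintE : IsIntegral E ζ := ⟨_, hq, by rwa [← aeval_def]⟩
  have : FiniteDimensional F E := adjoin.finiteDimensional hint
  have : FiniteDimensional E E⟮ζ⟯ := adjoin.finiteDimensional hintE
  have : FiniteDimensional F E⟮ζ⟯ := .trans F E E⟮ζ⟯
  have : Module.Free E E⟮ζ⟯ := .of_divisionRing _ _
  have : IsScalarTower F E⟮ζ⟯ K := .of_algebraMap_eq fun _ ↦ rfl
  have hEζ : Module.finrank E E⟮ζ⟯ ≤ 2 := by
    rw [adjoin.finrank hintE, ← hqdeg]
    exact natDegree_le_of_dvd (minpoly.dvd E ζ hqζ) hq.ne_zero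
  calc (minpoly F ζ).natDegree
      = (minpoly F (⟨ζ, mem_adjoin_simple_self E ζ⟩ : E⟮ζ⟯)).natDegree := by
        rw [← minpoly.algebraMap_eq (algebraMap E⟮ζ⟯ K).injective]; rfl
    _ ≤ Module.finrank F E⟮ζ⟯ := minpoly.natDegree_le _
    _ = Module.finrank F E * Module.finrank E E⟮ζ⟯ := (Module.finrank_mul_finrank F E E⟮ζ⟯).symm
    _ ≤ 2 * (minpoly F (ζ + ζ⁻¹)).natDegree := by rw [adjoin.finrank hint, mul_comm]; gcongr

theorem IsPrimitiveRoot.totient_le_two_mul_natDegree_minpoly_add_inv {K : Type*} [Field K]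
    [CharZero K] {n : ℕ} (hn : 0 < n) {ζ : K} (hζ : IsPrimitiveRoot ζ n)
    (hint : IsIntegral ℚ (ζ + ζ⁻¹)) : n.totient ≤ 2 * (minpoly ℚ (ζ + ζ⁻¹)).natDegree := by
  rw [← natDegree_cyclotomic n ℚ, cyclotomic_eq_minpoly_rat hζ hn]
  exact natDegree_minpoly_le_two_mul_natDegree_minpoly_add_inv (hζ.ne_zero hn.ne') hint

theorem IsPrimitiveRoot.minpoly_add_inv_eq_divX_dickson {K : Type*} [Field K] [CharZero K]
    {p : ℕ} (hp : p.Prime) (hodd : Odd p) {ζ : K} (hζ : IsPrimitiveRoot ζ (4 * p)) :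
    minpoly ℚ (ζ + ζ⁻¹) = (dickson 1 (1 : ℚ) p).divX := by
  obtain ⟨k, rfl⟩ := hodd
  set D := dickson 1 (1 : ℚ) (2 * k + 1)
  have hk : k ≠ 0 := by rintro rfl; exact Nat.not_prime_one hp
  have hD : D = X * D.divX := by
    simpa [D, coeff_zero_dickson_one_one_two_mul_add_one] using (X_mul_divX_add D).symm
  have hmonic : D.divX.Monic := monic_X.of_mul_monic_left (hD ▸ dickson_one_one_monic (by omega))
  have hdeg : D.divX.natDegree = 2 * k := by
    rw [natDegree_divX_eq_natDegree_tsub_one, natDegree_dickson_one_one, Nat.add_sub_cancel]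
  have hroot : aeval (ζ + ζ⁻¹) D = 0 := by
    rw [aeval_def, ← eval_map, map_dickson, map_one]
    have hζ2 : IsPrimitiveRoot (ζ ^ (2 * (2 * k + 1))) 2 := hζ.pow (by omega) (by ring)
    exact dickson_one_one_eval_add_inv_eq_zero (mul_inv_cancel₀ (hζ.ne_zero (by omega)))
      hζ2.eq_neg_one_of_two_right
  have hint : IsIntegral ℚ (ζ + ζ⁻¹) := ⟨D, dickson_one_one_monic (by omega), by rwa [← aeval_def]⟩
  have hlow : 2 * k ≤ (minpoly ℚ (ζ + ζ⁻¹)).natDegree := by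
    have := hζ.totient_le_two_mul_natDegree_minpoly_add_inv (by omega) hint
    rw [Nat.totient_mul ((Nat.coprime_two_left.2 (odd_two_mul_add_one k)).pow_left 2),
      Nat.totient_prime hp, show Nat.totient 4 = 2 by decide] at this
    omega
  have hne : ζ + ζ⁻¹ ≠ 0 := by
    intro h
    rw [h, minpoly.zero, natDegree_X] at hlow
    omega
  have hrootW : aeval (ζ + ζ⁻¹) D.divX = 0 := by
    rw [hD, map_mul, aeval_X] at hroot
    exact (mul_eq_zero.1 hroot).resolve_left hne
  exact (eq_of_monic_of_dvd_of_natDegree_le (minpoly.monic hint) hmonic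
    (minpoly.dvd _ _ hrootW) (hdeg ▸ hlow)).symm

/-- For an odd prime p, the constant term of the minimal polynomial of 2cos(π/(2p))
is (-1)^{(p-1)/2}·p. -/
theorem constant_term_C_two_p (p : ℕ) (hp : p.Prime) (hodd : Odd p) :
    (minpoly ℚ ((2 : ℝ) * Real.cos (π / (2 * p)))).coeff 0 =
      (-1 : ℚ) ^ ((p - 1) / 2) * p := by
  set ζ := Complex.exp (↑(π / (2 * p)) * Complex.I)
  have hζ : IsPrimitiveRoot ζ (4 * p) := by
    convert Complex.isPrimitiveRoot_exp (4 * p) (mul_ne_zero four_ne_zero hp.ne_zero) using 2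
    have : (p : ℂ) ≠ 0 := by exact_mod_cast hp.ne_zero
    push_cast
    field_simp
    ring
  have hα : algebraMap ℝ ℂ (2 * Real.cos (π / (2 * p))) = ζ + ζ⁻¹ := by
    rw [← Complex.exp_neg, ← neg_mul, Complex.coe_algebraMap, Complex.ofReal_mul,
      Complex.ofReal_cos, Complex.ofReal_ofNat, Complex.two_cos]
  rw [← minpoly.algebraMap_eq (algebraMap ℝ ℂ).injective, hα,
    hζ.minpoly_add_inv_eq_divX_dickson hp hodd, coeff_divX]
  obtain ⟨k, rfl⟩ := hodd
  rw [zero_add, coeff_one_dickson_one_one_two_mul_add_one, Nat.add_sub_cancel,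
    Nat.mul_div_cancel_left k two_pos]
  push_cast
  ring
end

section
/- For an odd prime p, the constant term of the minimal polynomial of 2cos(π/p) satisfies C(p,0) = (-1)^{(p-1)/4} if p ≡ 1 (mod 4), and C(p,0) = (-1)^{(p+1)/4} if p ≡ 3 (mod 4). In particular |C(p,0)| = 1. -/
/-!
Let `ζ = exp (π i / p)`, a primitive `2p`-th root of unity, so that `2 cos (π / p) = ζ + ζ⁻¹`.
If `g` is the minimal polynomial of `ζ + ζ⁻¹` and `m` its degree, then `X ^ m * g (X + X⁻¹)` is a
monic polynomial of degree `2m` vanishing at `ζ`, hence divisible by `Φ₂ₚ`. Conversely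
`ℚ(ζ + ζ⁻¹)` is real, so it is a proper subfield of `ℚ(ζ)` and `2m ≤ φ(2p) = p - 1`. Therefore
`X ^ m * g (X + X⁻¹) = Φ₂ₚ`, and evaluating at `i`, where `i + i⁻¹ = 0`, gives
`g(0) i ^ m = Φ₂ₚ(i)`. Finally `Φ₂ₚ(i) Φₚ(i) = Φₚ(i²) = Φₚ(-1) = 1`, while
`Φₚ(i) = (i ^ p - 1) / (i - 1)` is `1` or `i` according as `p ≡ 1` or `3 mod 4`.
-/

open Real

open Polynomial Complex IntermediateField Module

namespace Polynomial

variable {R : Type*} [CommRing R]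

-- `X ^ natDegree g * g (X + X⁻¹)`, with the denominators cleared.
noncomputable def palindromicLift (g : R[X]) : R[X] :=
  ∑ k ∈ Finset.range (g.natDegree + 1), C (g.coeff k) * (X ^ 2 + 1) ^ k * X ^ (g.natDegree - k)

theorem Monic.palindromicLift [Nontrivial R] {g : R[X]} (hg : g.Monic) :
    (palindromicLift g).Monic ∧ (palindromicLift g).natDegree = 2 * g.natDegree := by
  set m := g.natDegree
  have hquad : (X ^ 2 + 1 : R[X]).Monic := monic_X_pow_add_C 1 two_ne_zero
  have hlead : ((X ^ 2 + 1 : R[X]) ^ m).Monic := hquad.pow m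
  have hlead_deg : ((X ^ 2 + 1 : R[X]) ^ m).natDegree = 2 * m := by
    rw [hquad.natDegree_pow, ← C_1, natDegree_X_pow_add_C, mul_comm]
  have hlow : (∑ k ∈ Finset.range m, C (g.coeff k) * (X ^ 2 + 1) ^ k * X ^ (m - k)).degree <
      ((X ^ 2 + 1 : R[X]) ^ m).degree := by
    rw [degree_eq_natDegree hlead.ne_zero, hlead_deg]
    refine (degree_sum_le _ _).trans_lt ((Finset.sup_lt_iff (WithBot.bot_lt_coe _)).mpr ?_)
    intro k hk
    have hk : k < m := Finset.mem_range.mp hk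
    have hterm : (C (g.coeff k) * (X ^ 2 + 1) ^ k * X ^ (m - k)).natDegree ≤ m + k := by
      compute_degree
      omega
    exact degree_le_natDegree.trans_lt (by exact_mod_cast hterm.trans_lt (by omega))
  have hsplit : Polynomial.palindromicLift g =
      ∑ k ∈ Finset.range m, C (g.coeff k) * (X ^ 2 + 1) ^ k * X ^ (m - k) + (X ^ 2 + 1) ^ m := by
    rw [Polynomial.palindromicLift, Finset.sum_range_succ, hg.coeff_natDegree, Nat.sub_self,
      pow_zero, mul_one, C_1, one_mul]
  rw [hsplit]
  exact ⟨hlead.add_of_right hlow, by rw [natDegree_add_eq_right_of_degree_lt hlow, hlead_deg]⟩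

theorem aeval_palindromicLift {A : Type*} [Field A] [Algebra R A] (g : R[X]) {x : A}
    (hx : x ≠ 0) : aeval x (palindromicLift g) = x ^ g.natDegree * aeval (x + x⁻¹) g := by
  rw [palindromicLift, map_sum, aeval_eq_sum_range, Finset.mul_sum]
  refine Finset.sum_congr rfl fun k hk => ?_
  have hk : k ≤ g.natDegree := Nat.lt_succ_iff.mp (Finset.mem_range.mp hk)
  have hsq : x ^ 2 + 1 = x * (x + x⁻¹) := by field_simp
  simp only [map_mul, aeval_C, map_pow, map_add, aeval_X, map_one, hsq, mul_pow,
    Algebra.smul_def]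
  conv_rhs => rw [← Nat.sub_add_cancel hk, pow_add]
  ring

theorem aeval_I_palindromicLift [Algebra R ℂ] (g : R[X]) :
    aeval I (palindromicLift g) = algebraMap R ℂ (g.coeff 0) * I ^ g.natDegree := by
  rw [aeval_palindromicLift g I_ne_zero, inv_I, add_neg_cancel,
    coeff_zero_eq_aeval_zero', mul_comm]

theorem eval_neg_one_cyclotomic_prime (R : Type*) [Ring R] {p : ℕ} [Fact p.Prime]
    (hp : Odd p) : eval (-1) (cyclotomic p R) = 1 := by
  simp only [cyclotomic_prime, eval_finsetSum, eval_X_pow, neg_one_geom_sum,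
    if_neg (Nat.not_even_iff_odd.mpr hp)]

theorem eval_I_cyclotomic_two_mul_mul_eval_I_cyclotomic {p : ℕ} [Fact p.Prime] (hp : Odd p) :
    eval I (cyclotomic (2 * p) ℂ) * eval I (cyclotomic p ℂ) = 1 := by
  have h := congrArg (eval I) <| cyclotomic_expand_eq_cyclotomic_mul Nat.prime_two
    (Nat.two_dvd_ne_zero.mpr (Nat.odd_iff.mp hp)) ℂ
  rwa [expand_eval, I_sq, eval_neg_one_cyclotomic_prime ℂ hp, eval_mul, mul_comm p, eq_comm] at h

theorem I_pow_mul_eval_I_cyclotomic_prime {p : ℕ} [Fact p.Prime] (hp : Odd p) :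
    I ^ ((p - 1) / 2) * eval I (cyclotomic p ℂ) =
      if p % 4 = 1 then (-1) ^ ((p - 1) / 4) else (-1) ^ ((p + 1) / 4) := by
  have hgeom : eval I (cyclotomic p ℂ) * (I - 1) = I ^ p - 1 := by
    simpa using congrArg (eval I) (cyclotomic_prime_mul_X_sub_one ℂ p)
  have hI : I - 1 ≠ 0 := sub_ne_zero.mpr fun h => by simpa using congrArg im h
  obtain ⟨a, rfl | rfl⟩ : ∃ a, p = 4 * a + 1 ∨ p = 4 * a + 3 :=
    ⟨p / 4, by have := Nat.odd_iff.mp hp; omega⟩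
  · have hΦ : eval I (cyclotomic (4 * a + 1) ℂ) = 1 := mul_right_cancel₀ hI <| by
      rw [hgeom, pow_succ, pow_mul, I_pow_four, one_pow, one_mul, one_mul]
    rw [if_pos (by omega), show (4 * a + 1 - 1) / 2 = 2 * a by omega,
      show (4 * a + 1 - 1) / 4 = a by omega, pow_mul, I_sq, hΦ, mul_one]
  · have hΦ : eval I (cyclotomic (4 * a + 3) ℂ) = I := mul_right_cancel₀ hI <| by
      rw [hgeom, pow_add, pow_mul, I_pow_four, one_pow, one_mul, I_pow_three]
      linear_combination -I_sq
    rw [if_neg (by omega), show (4 * a + 3 - 1) / 2 = 2 * a + 1 by omega,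
      show (4 * a + 3 + 1) / 4 = a + 1 by omega, hΦ, ← pow_succ,
      show 2 * a + 1 + 1 = 2 * (a + 1) by ring, pow_mul, I_sq]

end Polynomial

theorem IntermediateField.two_mul_finrank_le_of_lt {K L : Type*} [Field K] [Field L]
    [Algebra K L] {F E : IntermediateField K L} [FiniteDimensional K E] (h : F < E) :
    2 * finrank K F ≤ finrank K E := by
  obtain ⟨d, hd⟩ := finrank_dvd_of_le_right h.le
  have hd0 : d ≠ 0 := by
    rintro rfl
    exact Module.finrank_pos.ne' (hd.trans (mul_zero _))
  have hd1 : d ≠ 1 := by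
    rintro rfl
    exact h.ne (eq_of_le_of_finrank_eq h.le (hd.trans (mul_one _)).symm)
  rw [hd, mul_comm]
  exact Nat.mul_le_mul_left _ (by omega)

namespace IsPrimitiveRoot

variable {ζ : ℂ} {n : ℕ}

theorem im_ne_zero (hζ : IsPrimitiveRoot ζ n) (hn : 2 < n) : ζ.im ≠ 0 := by
  intro him
  have hre : ζ.re ^ 2 = 1 := by
    have := normSq_eq_norm_sq ζ
    rw [hζ.norm'_eq_one (by omega), normSq_apply, him] at this
    linarith
  have hsq : ζ ^ 2 = 1 := by
    rw [← re_add_im ζ, him, ofReal_zero, zero_mul, add_zero, ← ofReal_pow, hre, ofReal_one]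
  exact absurd (Nat.le_of_dvd two_pos (hζ.dvd_of_pow_eq_one 2 hsq)) (by omega)

theorem isIntegral_add_inv (hζ : IsPrimitiveRoot ζ n) (hn : n ≠ 0) : IsIntegral ℚ (ζ + ζ⁻¹) :=
  (hζ.isIntegral (Nat.pos_of_ne_zero hn)).tower_top.add
    (hζ.inv.isIntegral (Nat.pos_of_ne_zero hn)).tower_top

theorem add_inv_eq_ofReal (hζ : IsPrimitiveRoot ζ n) (hn : n ≠ 0) :
    ζ + ζ⁻¹ = ((2 * ζ.re : ℝ) : ℂ) := by
  rw [inv_eq_conj (hζ.norm'_eq_one hn), add_conj]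

theorem two_mul_natDegree_minpoly_add_inv_le (hζ : IsPrimitiveRoot ζ n) (hn : 2 < n) :
    2 * (minpoly ℚ (ζ + ζ⁻¹)).natDegree ≤ n.totient := by
  have hζint : IsIntegral ℚ ζ := (hζ.isIntegral (by omega)).tower_top
  have hint := hζ.isIntegral_add_inv (by omega)
  have hreal : ℚ⟮ζ + ζ⁻¹⟯ ≤ (IsScalarTower.toAlgHom ℚ ℝ ℂ).fieldRange :=
    adjoin_simple_le_iff.mpr ⟨2 * ζ.re, (hζ.add_inv_eq_ofReal (by omega)).symm⟩
  have hle : ℚ⟮ζ + ζ⁻¹⟯ ≤ ℚ⟮ζ⟯ := adjoin_simple_le_iff.mpr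
    (add_mem (mem_adjoin_simple_self ℚ ζ) (inv_mem (mem_adjoin_simple_self ℚ ζ)))
  have hne : ℚ⟮ζ + ζ⁻¹⟯ ≠ ℚ⟮ζ⟯ := by
    intro h
    obtain ⟨r, hr⟩ := hreal (h ▸ mem_adjoin_simple_self ℚ ζ)
    exact hζ.im_ne_zero hn (hr ▸ ofReal_im r)
  have := adjoin.finiteDimensional hζint
  have := two_mul_finrank_le_of_lt (lt_of_le_of_ne hle hne)
  rwa [adjoin.finrank hint, adjoin.finrank hζint, ← cyclotomic_eq_minpoly_rat hζ (by omega),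
    natDegree_cyclotomic] at this

theorem palindromicLift_minpoly_add_inv (hζ : IsPrimitiveRoot ζ n) (hn : 2 < n) :
    palindromicLift (minpoly ℚ (ζ + ζ⁻¹)) = cyclotomic n ℚ := by
  have hint := hζ.isIntegral_add_inv (by omega)
  have hlift := (minpoly.monic hint).palindromicLift
  refine eq_of_monic_of_dvd_of_natDegree_le (cyclotomic.monic n ℚ) hlift.1 ?_ ?_
  · rw [cyclotomic_eq_minpoly_rat hζ (by omega)]
    refine minpoly.dvd ℚ ζ ?_
    rw [aeval_palindromicLift _ (hζ.ne_zero (by omega)), minpoly.aeval, mul_zero]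
  · rw [hlift.2, natDegree_cyclotomic]
    exact hζ.two_mul_natDegree_minpoly_add_inv_le hn

theorem two_mul_natDegree_minpoly_add_inv (hζ : IsPrimitiveRoot ζ n) (hn : 2 < n) :
    2 * (minpoly ℚ (ζ + ζ⁻¹)).natDegree = n.totient := by
  rw [← (minpoly.monic (hζ.isIntegral_add_inv (by omega))).palindromicLift.2,
    hζ.palindromicLift_minpoly_add_inv hn, natDegree_cyclotomic]

theorem coeff_zero_minpoly_add_inv_mul_I_pow (hζ : IsPrimitiveRoot ζ n) (hn : 2 < n) :
    ((minpoly ℚ (ζ + ζ⁻¹)).coeff 0 : ℂ) * I ^ (n.totient / 2) =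
      eval I (cyclotomic n ℂ) := by
  rw [← hζ.two_mul_natDegree_minpoly_add_inv hn, Nat.mul_div_cancel_left _ two_pos,
    ← map_cyclotomic n (algebraMap ℚ ℂ), eval_map, ← aeval_def,
    ← hζ.palindromicLift_minpoly_add_inv hn, aeval_I_palindromicLift, eq_ratCast]

end IsPrimitiveRoot

namespace Complex

theorem isPrimitiveRoot_exp_pi_div_mul_I {n : ℕ} (hn : n ≠ 0) :
    IsPrimitiveRoot (exp (↑(π / n) * I)) (2 * n) := by
  convert isPrimitiveRoot_exp (2 * n) (by omega) using 2
  push_cast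
  field_simp

theorem ofReal_two_mul_cos (x : ℝ) :
    ((2 * Real.cos x : ℝ) : ℂ) = exp (x * I) + (exp (x * I))⁻¹ := by
  rw [← exp_neg, ← neg_mul, ofReal_mul, ofReal_ofNat, ofReal_cos, two_cos]

end Complex

theorem eq_neg_one_pow_of_mul_eq_one {K : Type*} [DivisionRing K] {c : K} {k : ℕ}
    (h : c * (-1) ^ k = 1) : c = (-1) ^ k := by
  rw [eq_inv_of_mul_eq_one_left h, ← inv_pow, inv_neg, inv_one]

/-- For an odd prime p, the constant term of the minimal polynomial of 2cos(π/p) is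
(-1)^{(p-1)/4} if p ≡ 1 (mod 4) and (-1)^{(p+1)/4} if p ≡ 3 (mod 4); in particular its
absolute value is 1. -/
theorem constant_term_C_p (p : ℕ) (hp : p.Prime) (hodd : Odd p) :
    (minpoly ℚ ((2 : ℝ) * Real.cos (π / p))).coeff 0 =
      (if p % 4 = 1 then (-1 : ℚ) ^ ((p - 1) / 4) else (-1 : ℚ) ^ ((p + 1) / 4)) ∧
    |(minpoly ℚ ((2 : ℝ) * Real.cos (π / p))).coeff 0| = 1 := by
  have := Fact.mk hp
  have hζ := isPrimitiveRoot_exp_pi_div_mul_I hp.ne_zero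
  have htotient : (2 * p).totient / 2 = (p - 1) / 2 := by
    rw [Nat.totient_mul (Nat.coprime_two_left.mpr hodd), Nat.totient_two, one_mul,
      Nat.totient_prime hp]
  have hI := hζ.coeff_zero_minpoly_add_inv_mul_I_pow (by linarith [hp.two_le])
  rw [htotient] at hI
  have hsign := congrArg (· * eval I (cyclotomic p ℂ)) hI
  simp only [mul_assoc, I_pow_mul_eval_I_cyclotomic_prime hodd,
    eval_I_cyclotomic_two_mul_mul_eval_I_cyclotomic hodd] at hsign
  rw [← minpoly.algebraMap_eq (algebraMap ℝ ℂ).injective, Complex.coe_algebraMap,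
    ofReal_two_mul_cos]
  split_ifs at hsign ⊢ <;>
  · have hc := eq_neg_one_pow_of_mul_eq_one (K := ℚ) (by exact_mod_cast hsign)
    exact ⟨hc, by rw [hc, abs_pow, abs_neg, abs_one, one_pow]⟩
end

section
/- For n ≥ 2 and every l ≥ 1, the minimal polynomial C(n,x) of 2cos(π/n) divides the Chebyshev S-polynomial S(l·n - 1, x) in ℤ[x]. -/
open Real Polynomial

/-- For n ≥ 2 and l ≥ 1, the minimal polynomial C(n,x) of 2cos(π/n) divides the
Chebyshev S-polynomial S(l·n-1, x) = U(l·n-1, x/2). -/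
theorem C_dvd_S (n l : ℕ) (hn : 2 ≤ n) (hl : 1 ≤ l) :
    minpoly ℚ ((2 : ℝ) * Real.cos (π / n)) ∣
      (Polynomial.Chebyshev.U ℚ ((l * n - 1 : ℕ) : ℤ)).comp
        (Polynomial.C (2 : ℚ)⁻¹ * Polynomial.X) := by
  apply minpoly.dvd
  have hn0 : (0:ℝ) < n := by positivity
  have hsin : Real.sin (π / n) ≠ 0 := by
    have h1 : (0:ℝ) < π / n := by positivity
    have h2 : π / n < π :=
      div_lt_self Real.pi_pos (by exact_mod_cast lt_of_lt_of_le one_lt_two hn)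
    exact ne_of_gt (Real.sin_pos_of_pos_of_lt_pi h1 h2)
  rw [aeval_comp]
  have h1 : (aeval ((2:ℝ) * Real.cos (π / n))) (C (2:ℚ)⁻¹ * X) = Real.cos (π / n) := by
    simp
  rw [h1, aeval_def, ← eval_map, Polynomial.Chebyshev.map_U]
  have key := Polynomial.Chebyshev.U_real_cos (π / n) ((l * n - 1 : ℕ) : ℤ)
  have hln : 1 ≤ l * n := Nat.one_le_iff_ne_zero.mpr (by positivity)
  have hm' : ((((l * n - 1 : ℕ) : ℤ) : ℝ) + 1) * (π / n) = l * π := by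
    have : (((l * n - 1 : ℕ) : ℤ) : ℝ) + 1 = (l : ℝ) * n := by
      push_cast [Nat.cast_sub hln]; ring
    rw [this]
    field_simp
  rw [hm'] at key
  have : Real.sin ((l : ℝ) * π) = 0 := by
    exact_mod_cast Real.sin_nat_mul_pi l
  rw [this] at key
  exact (mul_eq_zero.mp key).resolve_right hsin
end

section
/- For all integers k and every n ≥ 1: \hat{t}(k, x) ≡ (-1)^{⌊k/n⌋} · \hat{t}(k mod n, x) (mod C(n,x)) in ℤ[x], where \hat{t}(m,x)=2T(m,x/2) and C(n,x) is the minimal polynomial of 2cos(π/n). -/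
open Real Polynomial

/-- The paper's `t̂ m`. -/
noncomputable def normalizedChebyshevT (m : ℤ) : ℚ[X] :=
  2 * (Chebyshev.T ℚ m).comp (C (2 : ℚ)⁻¹ * X)

theorem aeval_two_mul_cos_normalizedChebyshevT (m : ℤ) (θ : ℝ) :
    aeval (2 * cos θ) (normalizedChebyshevT m) = 2 * cos (m * θ) := by
  have half : aeval (2 * cos θ) (C (2 : ℚ)⁻¹ * X) = cos θ := by
    simp only [map_mul, aeval_C, aeval_X, map_inv₀, map_ofNat]
    ring
  simp only [normalizedChebyshevT, map_mul, map_ofNat, aeval_comp, half,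
    Chebyshev.aeval_T, Chebyshev.T_real_cos]

theorem Real.cos_int_mul_pi_div (k n : ℤ) :
    cos (k * (π / n)) = (-1) ^ (k / n) * cos ((k % n : ℤ) * (π / n)) := by
  rcases eq_or_ne n 0 with rfl | hn
  · simp
  have split : (k : ℝ) * (π / n) = (k % n : ℤ) * (π / n) + (k / n : ℤ) * π := by
    have hk : (k : ℝ) = (k % n : ℤ) + n * (k / n : ℤ) := by
      exact_mod_cast (Int.emod_add_mul_ediv k n).symm
    rw [hk]
    field_simp
  rw [split, cos_add_int_mul_pi, mul_comm]

theorem that_congruence_general (n : ℕ) (k : ℤ) :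
    minpoly ℚ ((2 : ℝ) * Real.cos (π / n)) ∣
      (2 * (Polynomial.Chebyshev.T ℚ k).comp (Polynomial.C (2 : ℚ)⁻¹ * Polynomial.X) -
        Polynomial.C ((-1 : ℚ) ^ (k / (n : ℤ))) *
          (2 * (Polynomial.Chebyshev.T ℚ (k % (n : ℤ))).comp
            (Polynomial.C (2 : ℚ)⁻¹ * Polynomial.X))) := by
  apply minpoly.dvd
  change aeval _ (normalizedChebyshevT k - C _ * normalizedChebyshevT (k % n)) = 0
  have sign : algebraMap ℚ ℝ ((-1) ^ (k / n)) = (-1) ^ (k / (n : ℤ)) := by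
    rw [map_zpow₀, map_neg, map_one]
  rw [map_sub, map_mul, aeval_C, sign, aeval_two_mul_cos_normalizedChebyshevT,
    aeval_two_mul_cos_normalizedChebyshevT, ← Int.cast_natCast, Real.cos_int_mul_pi_div]
  ring

/-- For all k ∈ ℤ and n ≥ 1: t̂(k,x) ≡ (-1)^{⌊k/n⌋}·t̂(k mod n, x) (mod C(n,x)), where
t̂(m,x) = 2T(m,x/2) and C(n,x) is the minimal polynomial of 2cos(π/n). -/
theorem that_congruence (n : ℕ) (hn : 1 ≤ n) (k : ℤ) :
    minpoly ℚ ((2 : ℝ) * Real.cos (π / n)) ∣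
      (2 * (Polynomial.Chebyshev.T ℚ k).comp (Polynomial.C (2 : ℚ)⁻¹ * Polynomial.X) -
        Polynomial.C ((-1 : ℚ) ^ (k / (n : ℤ))) *
          (2 * (Polynomial.Chebyshev.T ℚ (k % (n : ℤ))).comp
            (Polynomial.C (2 : ℚ)⁻¹ * Polynomial.X))) :=
  that_congruence_general n k
end

section
/- Define a_n : ℤ → {0,1,...,n-1} by a_n(k) = k mod n if ⌊k/n⌋ is even, and a_n(k) = (-k) mod n if ⌊k/n⌋ is odd. Then the 'Modd n' reduction is multiplicative: for all integers k, l, one has a_n(k·l) = a_n(a_n(k)·a_n(l)). -/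
/-- The Modd n reduction: a_n(k) = k mod n if ⌊k/n⌋ is even, (-k) mod n if ⌊k/n⌋ is odd. -/
def modd (n : ℕ) (k : ℤ) : ℤ :=
  if Even (k / (n : ℤ)) then k % (n : ℤ) else (-k) % (n : ℤ)

lemma modd_eq_zero (n : ℕ) (k : ℤ) (h : (n:ℤ) ∣ k) : modd n k = 0 := by
  unfold modd
  have h1 : k % (n:ℤ) = 0 := Int.emod_eq_zero_of_dvd h
  have h2 : (-k) % (n:ℤ) = 0 := Int.emod_eq_zero_of_dvd (dvd_neg.mpr h)
  split_ifs <;> simp [h1, h2]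

lemma ediv_neg_of_not_dvd (n : ℕ) (hn : 0 < n) (k : ℤ) (h : ¬ (n:ℤ) ∣ k) :
    (-k) / (n:ℤ) = -(k/(n:ℤ)) - 1 := by
  have hn' : (0:ℤ) < n := by exact_mod_cast hn
  have h1 : k % (n:ℤ) ≠ 0 := fun hh => h (Int.dvd_of_emod_eq_zero hh)
  have h2 : 0 ≤ k % (n:ℤ) := Int.emod_nonneg k hn'.ne'
  have h3 : k % (n:ℤ) < n := Int.emod_lt_of_pos k hn'
  have hk : (n:ℤ) * (k / n) + k % n = k := Int.mul_ediv_add_emod k n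
  have e : -k = ((n:ℤ) - k % n) + n * (-(k/(n:ℤ)) - 1) := by linarith
  rw [e, Int.add_mul_ediv_left _ _ hn'.ne',
    Int.ediv_eq_zero_of_lt (by omega) (by omega), zero_add]

lemma modd_period (n : ℕ) (hn : 0 < n) (k t : ℤ) : modd n (k + 2*n*t) = modd n k := by
  have hn' : ((n:ℤ)) ≠ 0 := by exact_mod_cast hn.ne'
  unfold modd
  have e : k + 2*(n:ℤ)*t = k + (n:ℤ) * (2*t) := by ring
  rw [e, Int.add_mul_ediv_left _ _ hn']
  have h1 : (k + (n:ℤ)*(2*t)) % n = k % n := by simp [Int.add_mul_emod_self_left]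
  have h2 : (-(k + (n:ℤ)*(2*t))) % n = (-k) % n := by
    have e2 : -(k + (n:ℤ)*(2*t)) = -k + (n:ℤ) * (-(2*t)) := by ring
    rw [e2]; simp [Int.add_mul_emod_self_left]
  rw [h1, h2]
  have h3 : Even (k / (n:ℤ) + 2*t) ↔ Even (k/(n:ℤ)) := by
    constructor
    · rintro ⟨c, hc⟩; exact ⟨c - t, by omega⟩
    · rintro ⟨c, hc⟩; exact ⟨c + t, by omega⟩
  rw [if_congr h3 rfl rfl]

lemma modd_neg (n : ℕ) (hn : 0 < n) (k : ℤ) : modd n (-k) = modd n k := by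
  by_cases h : (n:ℤ) ∣ k
  · rw [modd_eq_zero _ _ (dvd_neg.mpr h), modd_eq_zero _ _ h]
  · unfold modd
    rw [ediv_neg_of_not_dvd n hn k h, neg_neg]
    have h3 : Even (-(k/(n:ℤ)) - 1) ↔ ¬ Even (k/(n:ℤ)) := by
      constructor
      · rintro ⟨c, hc⟩ ⟨d, hd⟩; omega
      · intro hne
        rcases Int.even_or_odd (k/(n:ℤ)) with he | ⟨c, hc⟩
        · exact absurd he hne
        · exact ⟨-c - 1, by omega⟩
    split_ifs with h1 h2 h2 <;> simp_all

lemma modd_repr (n : ℕ) (hn : 0 < n) (k : ℤ) (h : ¬ (n:ℤ) ∣ k) :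
    ∃ t : ℤ, modd n k = k + 2*n*t ∨ modd n k = -k + 2*n*t := by
  unfold modd
  by_cases he : Even (k / (n:ℤ))
  · obtain ⟨q, hq⟩ := he
    refine ⟨-q, Or.inl ?_⟩
    rw [if_pos ⟨q, hq⟩, Int.emod_def, hq]; ring
  · obtain ⟨q, hq⟩ := Int.not_even_iff_odd.mp he
    refine ⟨q + 1, Or.inr ?_⟩
    rw [if_neg he, Int.emod_def, ediv_neg_of_not_dvd n hn k h, hq]; ring

/-- The Modd n reduction is multiplicative: a_n(k·l) = a_n(a_n(k)·a_n(l)). -/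
theorem modd_mul (n : ℕ) (hn : 1 ≤ n) (k l : ℤ) :
    modd n (k * l) = modd n (modd n k * modd n l) := by
  have hn0 : 0 < n := hn
  by_cases hk : (n:ℤ) ∣ k
  · rw [modd_eq_zero n _ (hk.mul_right l), modd_eq_zero n k hk, zero_mul,
      modd_eq_zero n 0 (dvd_zero _)]
  by_cases hl : (n:ℤ) ∣ l
  · rw [modd_eq_zero n _ (hl.mul_left k), modd_eq_zero n l hl, mul_zero,
      modd_eq_zero n 0 (dvd_zero _)]
  obtain ⟨a, ha⟩ := modd_repr n hn0 k hk
  obtain ⟨b, hb⟩ := modd_repr n hn0 l hl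
  rcases ha with ha | ha <;> rcases hb with hb | hb <;> rw [ha, hb]
  · have e : (k + 2*(n:ℤ)*a) * (l + 2*(n:ℤ)*b)
        = k*l + 2*(n:ℤ)*(k*b + a*l + 2*n*a*b) := by ring
    rw [e, modd_period n hn0]
  · have e : (k + 2*(n:ℤ)*a) * (-l + 2*(n:ℤ)*b)
        = -(k*l) + 2*(n:ℤ)*(k*b - a*l + 2*n*a*b) := by ring
    rw [e, modd_period n hn0, modd_neg n hn0]
  · have e : (-k + 2*(n:ℤ)*a) * (l + 2*(n:ℤ)*b)
        = -(k*l) + 2*(n:ℤ)*(-(k*b) + a*l + 2*n*a*b) := by ring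
    rw [e, modd_period n hn0, modd_neg n hn0]
  · have e : (-k + 2*(n:ℤ)*a) * (-l + 2*(n:ℤ)*b)
        = k*l + 2*(n:ℤ)*(-(k*b) - a*l + 2*n*a*b) := by ring
    rw [e, modd_period n hn0]
end

section
/- For every odd integer a coprime to n (n ≥ 2), one has a^{δ(n)} ≡ 1 (Modd n), i.e. a_n(a^{φ(2n)/2}) = 1, where a_n is the Modd n reduction. (Analogue of the Fermat–Euler theorem for the multiplicative group Modd n.) -/
open Subgroup

theorem modd_eq_one_of_modEq_one {n : ℕ} (hn : 2 ≤ n) {k : ℤ} (hk : k ≡ 1 [ZMOD 2 * n]) :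
    modd n k = 1 := by
  obtain ⟨q, hq⟩ := hk.symm.dvd
  have hk : k = 1 + n * (2 * q) := by linear_combination hq
  have hdiv : k / n = 2 * q := by
    rw [hk, Int.add_mul_ediv_left _ _ (by omega), Int.ediv_eq_zero_of_lt (by omega) (by omega),
      zero_add]
  rw [modd, hdiv, if_pos (even_two_mul q), hk, Int.add_mul_emod_self_left,
    Int.emod_eq_of_lt (by omega) (by omega)]

theorem modd_eq_one_of_modEq_neg_one {n : ℕ} (hn : 2 ≤ n) {k : ℤ} (hk : k ≡ -1 [ZMOD 2 * n]) :
    modd n k = 1 := by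
  obtain ⟨q, hq⟩ := hk.symm.dvd
  have hk : k = -1 + n * (2 * q) := by linear_combination hq
  have hdiv : k / n = 2 * q - 1 := by
    rw [hk, Int.add_mul_ediv_left _ _ (by omega), Int.ediv_eq_neg_one_of_neg_of_le (by omega)
      (by omega)]
    ring
  have hodd : ¬Even (k / n) := by rw [hdiv, Int.not_even_iff_odd]; exact ⟨q - 1, by ring⟩
  have hneg : -k = 1 + n * (-2 * q) := by rw [hk]; ring
  rw [modd, if_neg hodd, hneg, Int.add_mul_emod_self_left, Int.emod_eq_of_lt (by omega) (by omega)]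

theorem Units.eq_one_or_eq_neg_one_of_mem_zpowers_neg_one {R : Type*} [Monoid R] [HasDistribNeg R]
    {u : Rˣ} (hu : u ∈ zpowers (-1 : Rˣ)) : u = 1 ∨ u = -1 := by
  obtain ⟨k, rfl⟩ := mem_zpowers_iff.mp hu
  rcases k.even_or_odd with hk | hk
  · exact .inl hk.neg_one_zpow
  · exact .inr hk.neg_one_zpow

theorem ZMod.index_zpowers_neg_one {m : ℕ} (hm : 2 < m) :
    (zpowers (-1 : (ZMod m)ˣ)).index = m.totient / 2 := by
  have : Fact (1 < m) := ⟨by omega⟩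
  have : NeZero m := NeZero.of_gt hm
  have hcard : Nat.card (zpowers (-1 : (ZMod m)ˣ)) = 2 := by
    rw [Nat.card_zpowers, ← orderOf_units, Units.coe_neg_one, orderOf_neg_one,
      ZMod.ringChar_zmod_n, if_neg hm.ne']
  have := index_mul_card (zpowers (-1 : (ZMod m)ˣ))
  rw [hcard, Nat.card_eq_fintype_card, ZMod.card_units_eq_totient] at this
  omega

theorem Int.pow_totient_div_two_modEq_one_or_neg_one {m : ℕ} (hm : 2 < m) {a : ℤ}
    (ha : IsCoprime a m) :
    a ^ (m.totient / 2) ≡ 1 [ZMOD m] ∨ a ^ (m.totient / 2) ≡ -1 [ZMOD m] := by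
  have hmem := (zpowers (-1 : (ZMod m)ˣ)).pow_index_mem (ZMod.unitOfIsCoprime a ha)
  rw [ZMod.index_zpowers_neg_one hm] at hmem
  simp only [← ZMod.intCast_eq_intCast_iff, Int.cast_pow]
  rcases Units.eq_one_or_eq_neg_one_of_mem_zpowers_neg_one hmem with h | h
  · left; simpa using congrArg Units.val h
  · right; simpa using congrArg Units.val h

/-- Fermat–Euler analogue for Modd n: for odd a coprime to n (n ≥ 2),
a^{δ(n)} ≡ 1 (Modd n) where δ(n) = φ(2n)/2. -/
theorem modd_fermat_euler (n : ℕ) (hn : 2 ≤ n) (a : ℤ) (ha : Odd a)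
    (hcop : Int.gcd a (n : ℤ) = 1) :
    modd n (a ^ (Nat.totient (2 * n) / 2)) = 1 := by
  have hcop2 : IsCoprime a ((2 * n : ℕ) : ℤ) := by
    push_cast
    exact (Int.isCoprime_two_right.mpr ha).mul_right (Int.isCoprime_iff_gcd_eq_one.mpr hcop)
  rcases Int.pow_totient_div_two_modEq_one_or_neg_one (by omega) hcop2 with h | h
  · exact modd_eq_one_of_modEq_one hn (by exact_mod_cast h)
  · exact modd_eq_one_of_modEq_neg_one hn (by exact_mod_cast h)
end
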